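/- arXiv:2510.02983 — 2 statements merged into one kernel-verified Lean document; each statement's English description precedes it below -/
import Mathlib

section
/- Let d ≥ 1 and let K be a nonempty closed convex subset of ℝ^d with closedBall(0,1) ⊆ K ⊆ closedBall(0,R) for some R > 1. Then ∫_{ℝ^d} exp(−(d²/2)·infDist(y,K)²) dy ≤ (√(2πe) + 1) · vol(K). -/
/-!
Write `exp (-(d r)² / 2) = ∫_{s > d r} s e^{-s²/2} ds` with `r = infDist y K` and exchange the
integrals: the left-hand side becomes `∫_{s > 0} s e^{-s²/2} vol {y | d · infDist y K < s} ds`.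
As `K` is convex and contains the unit ball, its `s/d`-neighbourhood lies in `(1 + s/d) • K`, of
volume at most `(1 + s/d)^d vol K ≤ e^s vol K`. What remains is the one-dimensional bound
`∫_{s > 0} s e^{s - s²/2} ds ≤ 1 + √(2πe)`.
-/

open MeasureTheory Metric Set Filter Real Module Topology
open scoped ENNReal Pointwise

section Thickening

variable {E : Type*} [NormedAddCommGroup E] [NormedSpace ℝ E]

theorem thickening_subset_one_add_smul {K : Set E} (hK : Convex ℝ K) (hball : ball 0 1 ⊆ K)
    {δ : ℝ} (hδ : 0 < δ) : thickening δ K ⊆ (1 + δ) • K := by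
  have hδball : ball (0 : E) δ = δ • ball 0 1 := by
    rw [smul_unitBall hδ.ne', Real.norm_of_nonneg hδ.le]
  calc thickening δ K = (1 : ℝ) • K + δ • ball 0 1 := by rw [← add_ball_zero, hδball, one_smul]
    _ ⊆ (1 : ℝ) • K + δ • K := by gcongr
    _ = (1 + δ) • K := (hK.add_smul zero_le_one hδ.le).symm

theorem addHaar_thickening_le [MeasurableSpace E] [BorelSpace E] [FiniteDimensional ℝ E]
    (μ : Measure E) [μ.IsAddHaarMeasure] {K : Set E} (hK : Convex ℝ K) (hball : ball 0 1 ⊆ K)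
    {δ : ℝ} (hδ : 0 < δ) :
    μ (thickening δ K) ≤ ENNReal.ofReal ((1 + δ) ^ finrank ℝ E) * μ K :=
  calc μ (thickening δ K) ≤ μ ((1 + δ) • K) :=
        measure_mono (thickening_subset_one_add_smul hK hball hδ)
    _ = ENNReal.ofReal ((1 + δ) ^ finrank ℝ E) * μ K := by
      rw [Measure.addHaar_smul, abs_of_nonneg (by positivity)]

end Thickening

theorem lintegral_setLIntegral_Ioi_eq_lintegral_meas_lt_mul {α : Type*} [MeasurableSpace α]
    (μ : Measure α) [SFinite μ] {φ : α → ℝ} (hφ : Measurable φ) (hφ_nonneg : 0 ≤ φ)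
    {g : ℝ → ℝ≥0∞} (hg : Measurable g) :
    ∫⁻ x, (∫⁻ s in Ioi (φ x), g s) ∂μ = ∫⁻ s in Ioi 0, μ {x | φ x < s} * g s := by
  set S : Set (α × ℝ) := {p | φ p.1 < p.2}
  have hS : MeasurableSet S := measurableSet_lt (hφ.comp measurable_fst) measurable_snd
  have hinner (x : α) :
      ∫⁻ s in Ioi (φ x), g s = ∫⁻ s in Ioi 0, S.indicator (fun p => g p.2) (x, s) := by
    rw [← inter_eq_left.mpr (Ioi_subset_Ioi (hφ_nonneg x)),
      ← Measure.restrict_restrict measurableSet_Ioi, ← lintegral_indicator measurableSet_Ioi]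
    rfl
  have hslice (s : ℝ) : ∫⁻ x, S.indicator (fun p => g p.2) (x, s) ∂μ = μ {x | φ x < s} * g s := by
    rw [mul_comm, ← lintegral_indicator_const (measurableSet_lt hφ measurable_const)]
    rfl
  simp_rw [hinner]
  rw [lintegral_lintegral_swap (f := fun x s => S.indicator (fun p => g p.2) (x, s))
    ((hg.comp measurable_snd).indicator hS).aemeasurable]
  simp_rw [hslice]

theorem integrable_exp_neg_sq_div_two : Integrable fun x : ℝ => exp (-x ^ 2 / 2) :=
  (integrable_exp_neg_mul_sq (by norm_num : (0 : ℝ) < 1 / 2)).congr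
    (ae_of_all _ fun x => by ring_nf)

theorem integral_exp_neg_sq_div_two : ∫ x : ℝ, exp (-x ^ 2 / 2) = √(2 * π) := by
  have h := integral_gaussian (1 / 2)
  simp only [neg_div, one_div, neg_mul, inv_mul_eq_div] at h ⊢
  rw [h]
  congr 1
  ring

theorem integrable_mul_exp_neg_sq_div_two : Integrable fun x : ℝ => x * exp (-x ^ 2 / 2) :=
  (integrable_mul_exp_neg_mul_sq (by norm_num : (0 : ℝ) < 1 / 2)).congr
    (ae_of_all _ fun x => by ring_nf)

theorem integral_Ioi_sub_mul_exp_neg_sq_div_two (a b : ℝ) :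
    ∫ x in Ioi a, (x - b) * exp (-(x - b) ^ 2 / 2) = exp (-(a - b) ^ 2 / 2) := by
  have hderiv (x : ℝ) : HasDerivAt (fun x => -exp (-(x - b) ^ 2 / 2))
      ((x - b) * exp (-(x - b) ^ 2 / 2)) x := by
    have h : HasDerivAt (fun x => -(x - b) ^ 2 / 2) (-(x - b)) x :=
      ((((hasDerivAt_id' x).sub_const b).pow 2).neg.div_const 2).congr_deriv (by ring)
    exact h.exp.neg.congr_deriv (by ring)
  have hsq : Tendsto (fun x : ℝ => (x - b) ^ 2 / 2) atTop atTop :=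
    ((tendsto_pow_atTop two_ne_zero).comp
      (tendsto_atTop_add_const_right _ (-b) tendsto_id)).atTop_div_const two_pos
  have hlim : Tendsto (fun x => -exp (-(x - b) ^ 2 / 2)) atTop (𝓝 0) := by
    simpa [neg_div] using (tendsto_exp_neg_atTop_nhds_zero.comp hsq).neg
  rw [integral_Ioi_of_hasDerivAt_of_tendsto' (fun x _ => hderiv x)
    (integrable_mul_exp_neg_sq_div_two.comp_sub_right b).integrableOn hlim]
  ring

theorem lintegral_Ioi_mul_exp_neg_sq_div_two {a : ℝ} (ha : 0 ≤ a) :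
    ∫⁻ x in Ioi a, ENNReal.ofReal (x * exp (-x ^ 2 / 2)) = ENNReal.ofReal (exp (-a ^ 2 / 2)) := by
  rw [← ofReal_integral_eq_lintegral_ofReal integrable_mul_exp_neg_sq_div_two.integrableOn]
  · simpa using congrArg ENNReal.ofReal (integral_Ioi_sub_mul_exp_neg_sq_div_two a 0)
  · filter_upwards [ae_restrict_mem measurableSet_Ioi] with x hx
    have : 0 ≤ x := ha.trans (le_of_lt hx)
    positivity

/-- Completing the square, `x e^{x - x²/2} = e^{1/2} x e^{-(x-1)²/2}`; splitting `x = (x - 1) + 1`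
gives `e^{1/2} (e^{-1/2} + ∫_{x > 0} e^{-(x-1)²/2}) ≤ 1 + √(2π e)`. -/
theorem lintegral_Ioi_mul_exp_sub_sq_div_two_le :
    ∫⁻ x in Ioi 0, ENNReal.ofReal (x * exp (x - x ^ 2 / 2))
      ≤ ENNReal.ofReal (√(2 * π * exp 1) + 1) := by
  set f : ℝ → ℝ := fun x => (x - 1) * exp (-(x - 1) ^ 2 / 2) + exp (-(x - 1) ^ 2 / 2)
  have hf : Integrable f :=
    (integrable_mul_exp_neg_sq_div_two.comp_sub_right 1).add
      (integrable_exp_neg_sq_div_two.comp_sub_right 1)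
  have hsquare (x : ℝ) : x * exp (x - x ^ 2 / 2) = exp (1 / 2) * f x := by
    have : exp (x - x ^ 2 / 2) = exp (1 / 2) * exp (-(x - 1) ^ 2 / 2) := by
      rw [← exp_add]; ring_nf
    rw [this]; ring
  have hf_int : ∫ x in Ioi 0, f x ≤ exp (-1 / 2) + √(2 * π) := by
    rw [integral_add (integrable_mul_exp_neg_sq_div_two.comp_sub_right 1).integrableOn
      (integrable_exp_neg_sq_div_two.comp_sub_right 1).integrableOn,
      integral_Ioi_sub_mul_exp_neg_sq_div_two, ← integral_exp_neg_sq_div_two,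
      ← integral_sub_right_eq_self (fun x => exp (-x ^ 2 / 2)) 1]
    refine add_le_add (le_of_eq (by norm_num)) ?_
    exact setIntegral_le_integral (integrable_exp_neg_sq_div_two.comp_sub_right 1)
      (ae_of_all _ fun x => (exp_pos _).le)
  rw [← ofReal_integral_eq_lintegral_ofReal]
  · apply ENNReal.ofReal_le_ofReal
    simp_rw [hsquare]
    rw [integral_const_mul]
    calc exp (1 / 2) * ∫ x in Ioi 0, f x ≤ exp (1 / 2) * (exp (-1 / 2) + √(2 * π)) := by gcongr
      _ = √(2 * π * exp 1) + 1 := by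
        rw [mul_add, ← exp_add, sqrt_mul (by positivity : (0 : ℝ) ≤ 2 * π), ← exp_half]
        norm_num [add_comm, mul_comm]
  · simp_rw [hsquare]
    exact (hf.const_mul _).integrableOn
  · filter_upwards [ae_restrict_mem measurableSet_Ioi] with x hx
    have : 0 < x := hx
    positivity

theorem lintegral_exp_neg_sq_mul_infDist_le {E : Type*} [NormedAddCommGroup E]
    [NormedSpace ℝ E] [MeasurableSpace E] [BorelSpace E] [FiniteDimensional ℝ E]
    (μ : Measure E) [μ.IsAddHaarMeasure] (hE : 0 < finrank ℝ E) {K : Set E}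
    (hK : Convex ℝ K) (hball : ball 0 1 ⊆ K) :
    ∫⁻ y, ENNReal.ofReal (exp (-(finrank ℝ E * infDist y K) ^ 2 / 2)) ∂μ
      ≤ ENNReal.ofReal (√(2 * π * exp 1) + 1) * μ K := by
  set d : ℝ := (finrank ℝ E : ℝ)
  have hd : 0 < d := by positivity
  have hK_ne : K.Nonempty := ⟨0, hball (mem_ball_self one_pos)⟩
  have hφ_nonneg : 0 ≤ fun y => d * infDist y K := fun _ => mul_nonneg hd.le infDist_nonneg
  have hφ : Measurable fun y => d * infDist y K :=
    (continuous_infDist_pt K).measurable.const_mul d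
  have hsublevel {s : ℝ} (hs : 0 < s) :
      μ {y | d * infDist y K < s} ≤ ENNReal.ofReal (exp s) * μ K := by
    have hthick : {y | d * infDist y K < s} = thickening (s / d) K := by
      ext y
      rw [mem_thickening_iff_infDist_lt hK_ne, lt_div_iff₀' hd]
      rfl
    rw [hthick]
    refine (addHaar_thickening_le μ hK hball (by positivity)).trans ?_
    gcongr
    calc (1 + s / d) ^ finrank ℝ E ≤ exp (s / d) ^ finrank ℝ E := by
          gcongr; linarith [add_one_le_exp (s / d)]
      _ = exp s := by rw [← exp_nat_mul, mul_div_cancel₀ s hd.ne']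
  calc ∫⁻ y, ENNReal.ofReal (exp (-(d * infDist y K) ^ 2 / 2)) ∂μ
      = ∫⁻ y, (∫⁻ s in Ioi (d * infDist y K), ENNReal.ofReal (s * exp (-s ^ 2 / 2))) ∂μ := by
        simp_rw [lintegral_Ioi_mul_exp_neg_sq_div_two (hφ_nonneg _)]
    _ = ∫⁻ s in Ioi 0, μ {y | d * infDist y K < s} * ENNReal.ofReal (s * exp (-s ^ 2 / 2)) :=
        lintegral_setLIntegral_Ioi_eq_lintegral_meas_lt_mul μ hφ hφ_nonneg (by fun_prop)
    _ ≤ ∫⁻ s in Ioi 0, ENNReal.ofReal (s * exp (s - s ^ 2 / 2)) * μ K := by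
        refine setLIntegral_mono' measurableSet_Ioi fun s hs => ?_
        calc μ {y | d * infDist y K < s} * ENNReal.ofReal (s * exp (-s ^ 2 / 2))
            ≤ ENNReal.ofReal (exp s) * μ K * ENNReal.ofReal (s * exp (-s ^ 2 / 2)) := by
              gcongr; exact hsublevel hs
          _ = ENNReal.ofReal (s * exp (s - s ^ 2 / 2)) * μ K := by
              rw [mul_right_comm, ← ENNReal.ofReal_mul (exp_pos s).le, sub_eq_add_neg, exp_add]
              ring_nf
    _ = (∫⁻ s in Ioi 0, ENNReal.ofReal (s * exp (s - s ^ 2 / 2))) * μ K :=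
        lintegral_mul_const _ (by fun_prop)
    _ ≤ ENNReal.ofReal (√(2 * π * exp 1) + 1) * μ K := by
        gcongr; exact lintegral_Ioi_mul_exp_sub_sq_div_two_le

theorem stmt_5_general (d : ℕ) (hd : 1 ≤ d) (R : ℝ)
    (K : Set (EuclideanSpace ℝ (Fin d)))
    (hKconv : Convex ℝ K) (hK1 : closedBall (0 : EuclideanSpace ℝ (Fin d)) 1 ⊆ K)
    (hKR : K ⊆ closedBall (0 : EuclideanSpace ℝ (Fin d)) R) :
    ∫ y, Real.exp (-((d : ℝ) ^ 2 / 2) * (infDist y K) ^ 2) ≤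
      (Real.sqrt (2 * Real.pi * Real.exp 1) + 1) * (volume K).toReal := by
  have hK_fin : volume K ≠ ⊤ := ((measure_mono hKR).trans_lt measure_closedBall_lt_top).ne
  have key := lintegral_exp_neg_sq_mul_infDist_le volume
    (by rw [finrank_euclideanSpace_fin]; exact hd) hKconv
    (ball_subset_closedBall.trans hK1)
  rw [finrank_euclideanSpace_fin] at key
  have hintegrand : (fun y => exp (-((d : ℝ) ^ 2 / 2) * infDist y K ^ 2))
      = fun y => exp (-(d * infDist y K) ^ 2 / 2) := by
    ext y; ring_nf
  rw [hintegrand, integral_eq_lintegral_of_nonneg_ae (ae_of_all _ fun _ => (exp_pos _).le)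
    (by fun_prop)]
  calc (∫⁻ y, ENNReal.ofReal (exp (-(d * infDist y K) ^ 2 / 2))).toReal
      ≤ (ENNReal.ofReal (√(2 * π * exp 1) + 1) * volume K).toReal :=
        ENNReal.toReal_mono (ENNReal.mul_ne_top ENNReal.ofReal_ne_top hK_fin) key
    _ = (√(2 * π * exp 1) + 1) * (volume K).toReal := by
        rw [ENNReal.toReal_mul, ENNReal.toReal_ofReal (by positivity)]

theorem stmt_5 (d : ℕ) (hd : 1 ≤ d) (R : ℝ) (hR : 1 < R)
    (K : Set (EuclideanSpace ℝ (Fin d))) (hKne : K.Nonempty) (hKcl : IsClosed K)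
    (hKconv : Convex ℝ K) (hK1 : closedBall (0 : EuclideanSpace ℝ (Fin d)) 1 ⊆ K)
    (hKR : K ⊆ closedBall (0 : EuclideanSpace ℝ (Fin d)) R) :
    ∫ y, Real.exp (-((d : ℝ) ^ 2 / 2) * (infDist y K) ^ 2) ≤
      (Real.sqrt (2 * Real.pi * Real.exp 1) + 1) * (volume K).toReal :=
  stmt_5_general d hd R K hKconv hK1 hKR
end

section
/- Let d ≥ 1, η > 0, and let x̂, p, y ∈ ℝ^d. Define P3(x) = (1/(2η))·((‖x − x̂‖ − √(2η/d))² + (‖y − p‖ − 2·√(2η/d))² − 32η/d). Then ∫_{ℝ^d} exp(−P3(x)) dx ≤ exp(−(‖p − y‖ − 2·√(2η/d))²/(2η) + 16/d + 9/4) · (2πη)^{d/2}. -/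
/-!
Write `r = ‖x - x̂‖` and `b = √(2η/d)`. The factor of `exp (-P3)` that depends on `x` is
`exp (-(r - b)² / (2η))`, and the identity
`(d + 1)((r - b)² + d b²) - d r² = (r - (d + 1) b)²` bounds it by
`exp (d b² / (2η)) · exp (-d r² / ((d + 1) 2η))`, a centred Gaussian whose integral is
`(2πη (1 + 1/d))^{d/2} ≤ e^{1/2} (2πη)^{d/2}`. Since `d b² = 2η`, the total loss is `e^{3/2} ≤ e^{9/4}`.
-/

open MeasureTheory Real Module

lemma rpow_le_exp_sub_one_mul {t s : ℝ} (ht : 0 < t) (hs : 0 ≤ s) : t ^ s ≤ exp ((t - 1) * s) :=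
  (le_abs_self _).trans <| (abs_rpow_le_exp_log_mul t s).trans <|
    exp_le_exp.2 <| mul_le_mul_of_nonneg_right (log_le_sub_one_of_pos ht) hs

lemma mul_sq_le_add_one_mul_sub_sq_add_mul_sq (n r b : ℝ) :
    n * r ^ 2 ≤ (n + 1) * ((r - b) ^ 2 + n * b ^ 2) := by
  nlinarith [sq_nonneg (r - (n + 1) * b)]

lemma exp_neg_sub_sq_div_le {σ : ℝ} (hσ : 0 < σ) {n : ℝ} (hn : 0 ≤ n) (r b : ℝ) :
    exp (-(r - b) ^ 2 / (2 * σ)) ≤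
      exp (n * b ^ 2 / (2 * σ)) * exp (-(n / ((n + 1) * (2 * σ))) * r ^ 2) := by
  rw [← exp_add, exp_le_exp, ← sub_nonneg]
  have hden : 0 < (n + 1) * (2 * σ) := by positivity
  have : n * b ^ 2 / (2 * σ) + -(n / ((n + 1) * (2 * σ))) * r ^ 2 - -(r - b) ^ 2 / (2 * σ) =
      ((n + 1) * ((r - b) ^ 2 + n * b ^ 2) - n * r ^ 2) / ((n + 1) * (2 * σ)) := by
    field_simp
    ring
  rw [this]
  exact div_nonneg (sub_nonneg.2 (mul_sq_le_add_one_mul_sub_sq_add_mul_sq n r b)) hden.le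

section Gaussian

variable {V : Type*} [NormedAddCommGroup V] [InnerProductSpace ℝ V] [FiniteDimensional ℝ V]
  [MeasurableSpace V] [BorelSpace V]

lemma integral_exp_neg_mul_sq_norm_sub {a : ℝ} (ha : 0 < a) (c : V) :
    ∫ x : V, exp (-a * ‖x - c‖ ^ 2) = (π / a) ^ (finrank ℝ V / 2 : ℝ) := by
  rw [integral_sub_right_eq_self (fun x ↦ exp (-a * ‖x‖ ^ 2)) c]
  exact GaussianFourier.integral_rexp_neg_mul_sq_norm ha

lemma integrable_exp_neg_mul_sq_norm_sub {a : ℝ} (ha : 0 < a) (c : V) :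
    Integrable fun x : V ↦ exp (-a * ‖x - c‖ ^ 2) := by
  refine Integrable.of_integral_ne_zero ?_
  rw [integral_exp_neg_mul_sq_norm_sub ha c]
  exact (rpow_pos_of_pos (by positivity) _).ne'

lemma integral_exp_neg_sq_norm_sub_sub_le (hV : 0 < finrank ℝ V) {σ : ℝ} (hσ : 0 < σ)
    (c : V) (b : ℝ) :
    ∫ x : V, exp (-(‖x - c‖ - b) ^ 2 / (2 * σ)) ≤
      exp (finrank ℝ V * b ^ 2 / (2 * σ) + 1 / 2) * (2 * π * σ) ^ (finrank ℝ V / 2 : ℝ) := by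
  have hn : (0 : ℝ) < finrank ℝ V := by exact_mod_cast hV
  set n : ℝ := (finrank ℝ V : ℝ)
  have ha : 0 < n / ((n + 1) * (2 * σ)) := by positivity
  have hπa : π / (n / ((n + 1) * (2 * σ))) = (1 + n⁻¹) * (2 * π * σ) := by
    field_simp
  have hratio : (1 + n⁻¹) ^ (n / 2) ≤ exp (1 / 2) := by
    refine (rpow_le_exp_sub_one_mul (by positivity) (by positivity)).trans_eq ?_
    congr 1
    field_simp
    ring
  calc ∫ x : V, exp (-(‖x - c‖ - b) ^ 2 / (2 * σ))
      ≤ ∫ x : V, exp (n * b ^ 2 / (2 * σ)) * exp (-(n / ((n + 1) * (2 * σ))) * ‖x - c‖ ^ 2) :=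
        integral_mono_of_nonneg (.of_forall fun _ ↦ (exp_pos _).le)
          ((integrable_exp_neg_mul_sq_norm_sub ha c).const_mul _)
          (.of_forall fun x ↦ exp_neg_sub_sq_div_le hσ hn.le ‖x - c‖ b)
    _ = exp (n * b ^ 2 / (2 * σ)) * ((1 + n⁻¹) ^ (n / 2) * (2 * π * σ) ^ (n / 2)) := by
        rw [integral_const_mul, integral_exp_neg_mul_sq_norm_sub ha, hπa,
          mul_rpow (by positivity) (by positivity)]
    _ ≤ exp (n * b ^ 2 / (2 * σ)) * (exp (1 / 2) * (2 * π * σ) ^ (n / 2)) := by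
        gcongr
    _ = exp (n * b ^ 2 / (2 * σ) + 1 / 2) * (2 * π * σ) ^ (n / 2) := by
        rw [exp_add]
        ring

end Gaussian

theorem stmt_9 (d : ℕ) (hd : 1 ≤ d) (η : ℝ) (hη : 0 < η)
    (xhat p y : EuclideanSpace ℝ (Fin d))
    (P3 : EuclideanSpace ℝ (Fin d) → ℝ)
    (hP3 : ∀ x, P3 x = (1 / (2 * η)) * ((‖x - xhat‖ - Real.sqrt (2 * η / d)) ^ 2 +
        (‖y - p‖ - 2 * Real.sqrt (2 * η / d)) ^ 2 - 32 * η / d)) :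
    ∫ x, Real.exp (-P3 x) ≤
      Real.exp (-(‖p - y‖ - 2 * Real.sqrt (2 * η / d)) ^ 2 / (2 * η) + 16 / d + 9 / 4) *
        (2 * Real.pi * η) ^ ((d : ℝ) / 2) := by
  have hd0 : (0 : ℝ) < d := by exact_mod_cast hd
  set b := √(2 * η / d)
  have hdb : (d : ℝ) * b ^ 2 / (2 * η) = 1 := by
    rw [sq_sqrt (by positivity)]
    field_simp
  set K := -(‖p - y‖ - 2 * b) ^ 2 / (2 * η) + 16 / d
  have hsplit : ∀ x, exp (-P3 x) = exp K * exp (-(‖x - xhat‖ - b) ^ 2 / (2 * η)) := by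
    intro x
    rw [hP3, ← exp_add, norm_sub_rev y p]
    congr 1
    simp only [K]
    field_simp
    ring
  have hG := integral_exp_neg_sq_norm_sub_sub_le (V := EuclideanSpace ℝ (Fin d))
    (by rwa [finrank_euclideanSpace_fin]) hη xhat b
  rw [finrank_euclideanSpace_fin, hdb] at hG
  simp_rw [hsplit]
  rw [integral_const_mul]
  calc exp K * ∫ x, exp (-(‖x - xhat‖ - b) ^ 2 / (2 * η))
      ≤ exp K * (exp (1 + 1 / 2) * (2 * π * η) ^ ((d : ℝ) / 2)) := by gcongr
    _ ≤ exp (K + 9 / 4) * (2 * π * η) ^ ((d : ℝ) / 2) := by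
        rw [← mul_assoc, ← exp_add]
        gcongr
        norm_num
end
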